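/- Let X be a complex Banach space, 𝕏 a compact topological space, 𝒯 : 𝕏 → L(X) a continuous family, and (𝒯ₙ)ₙ a sequence of continuous families converging to 𝒯 in the sup norm, i.e. sup_{x∈𝕏} ‖(𝒯ₙ)ₓ − 𝒯ₓ‖ → 0. Then limsup_{n→∞} σ_W(𝒯ₙ) ⊆ σ_W(𝒯); that is, for every λ ∉ σ_W(𝒯) there exist ε > 0 and N ∈ ℕ such that for all n ≥ N, no μ ∈ ℂ with |μ − λ| < ε belongs to σ_W(𝒯ₙ). (The map 𝒯 ↦ σ_W(𝒯) is upper semicontinuous.) -/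

import Mathlib

/-- A bounded operator `T : X → X` is Fredholm if its kernel is finite-dimensional and
its range is closed and of finite codimension. -/
def IsFredholm {X : Type*} [NormedAddCommGroup X] [NormedSpace ℂ X] (T : X →L[ℂ] X) : Prop :=
  FiniteDimensional ℂ (LinearMap.ker (T : X →ₗ[ℂ] X)) ∧ IsClosed (LinearMap.range (T : X →ₗ[ℂ] X) : Set X) ∧
    FiniteDimensional ℂ (X ⧸ LinearMap.range (T : X →ₗ[ℂ] X))

/-- The Fredholm index `ind T = dim ker T - dim (X / ran T)`. -/
noncomputable def fredholmIndex {X : Type*} [NormedAddCommGroup X] [NormedSpace ℂ X]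
    (T : X →L[ℂ] X) : ℤ :=
  (Module.finrank ℂ (LinearMap.ker (T : X →ₗ[ℂ] X)) : ℤ) - (Module.finrank ℂ (X ⧸ LinearMap.range (T : X →ₗ[ℂ] X)) : ℤ)

/-- `T` is a Weyl operator if it is Fredholm of index `0`. -/
def IsWeyl {X : Type*} [NormedAddCommGroup X] [NormedSpace ℂ X] (T : X →L[ℂ] X) : Prop :=
  IsFredholm T ∧ fredholmIndex T = 0

/-- The Weyl spectrum of a family of operators:
`σ_W(𝒯) = {λ ∈ ℂ : ∃ x, 𝒯 x - λ • I is not Weyl}`. -/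
def weylSpectrum {X : Type*} [NormedAddCommGroup X] [NormedSpace ℂ X]
    {𝕏 : Type*} (𝒯 : 𝕏 → X →L[ℂ] X) : Set ℂ :=
  {z | ∃ x, ¬ IsWeyl (𝒯 x - z • 1)}

/-!
Atkinson-type characterisation: `T` is Weyl iff `T + F` is invertible for some finite-rank `F`.
Since the invertible operators form an open set, so do the Weyl operators. For `z ∉ σ_W(𝒯)` the
compact set `{𝒯ₓ - z | x ∈ 𝕏}` of Weyl operators then has a uniform neighbourhood of Weyl
operators, which contains every `(𝒯ₙ)ₓ - μ` once `n` is large and `μ` is close to `z`.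
-/

open LinearMap Module

section Weyl

variable {X : Type*} [NormedAddCommGroup X] [NormedSpace ℂ X]

theorem IsWeyl.isUnit_mul {u B : X →L[ℂ] X} (hu : IsUnit u) (hB : IsWeyl B) :
    IsWeyl (u * B) := by
  obtain ⟨⟨hker, hclosed, hcoker⟩, hindex⟩ := hB
  obtain ⟨u, rfl⟩ := hu
  set e := ContinuousLinearEquiv.unitsEquiv ℂ X u
  have hker_eq : ker ((u * B : X →L[ℂ] X) : X →ₗ[ℂ] X) = ker (B : X →ₗ[ℂ] X) :=
    ker_comp_of_ker_eq_bot _ (ker_eq_bot_of_injective e.injective)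
  have hrange_eq : range ((u * B : X →L[ℂ] X) : X →ₗ[ℂ] X) =
      (range (B : X →ₗ[ℂ] X)).map (e.toLinearEquiv : X →ₗ[ℂ] X) := range_comp _ _
  let ecoker := Submodule.Quotient.equiv _ _ e.toLinearEquiv hrange_eq.symm
  refine ⟨⟨hker_eq ▸ hker, ?_, ecoker.finiteDimensional⟩, ?_⟩
  · rw [hrange_eq]
    exact e.toHomeomorph.isClosedMap _ hclosed
  · rw [fredholmIndex, hker_eq, ← ecoker.finrank_eq]
    exact hindex

-- `1 + F` is the identity on `ker F`, a closed subspace of finite codimension.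
theorem isClosed_range_one_add {F : X →L[ℂ] X} (hF : (F : X →ₗ[ℂ] X).HasFiniteRange) :
    IsClosed (range ((1 + F : X →L[ℂ] X) : X →ₗ[ℂ] X) : Set X) := by
  have : (ker (F : X →ₗ[ℂ] X)).CoFG := hF.cofg_ker
  have hmap : (ker (F : X →ₗ[ℂ] X)).map ((1 + F : X →L[ℂ] X) : X →ₗ[ℂ] X) =
      ker (F : X →ₗ[ℂ] X) := by
    ext y
    constructor
    · rintro ⟨x, hx, rfl⟩
      have hx' : F x = 0 := hx
      show F (x + F x) = 0
      simp [hx']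
    · intro hy
      have hy' : F y = 0 := hy
      exact ⟨y, hy, by simp [hy']⟩
  exact isClosed_range_of_isClosed_map_of_finiteDimensional_quotient
    (by rw [hmap]; exact F.isClosed_ker)

/- `T = 1 + F` preserves `V = range F`, `ker T ⊆ V` and `V + range T = X`, so kernel and cokernel
of `T` are those of its restriction to the finite-dimensional `V`, where rank–nullity applies. -/
theorem isWeyl_one_add {F : X →L[ℂ] X} (hF : (F : X →ₗ[ℂ] X).HasFiniteRange) :
    IsWeyl (1 + F) := by
  set T : X →ₗ[ℂ] X := ((1 + F : X →L[ℂ] X) : X →ₗ[ℂ] X)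
  set V := range (F : X →ₗ[ℂ] X)
  have hT : ∀ x, T x = x + F x := fun x => rfl
  have : FiniteDimensional ℂ V := .of_fg hF
  have hTV : ∀ x ∈ V, T x ∈ V := fun x hx => V.add_mem hx (mem_range_self _ x)
  have hV_of_T : ∀ x, T x ∈ V → x ∈ V := fun x hx => by
    simpa [hT] using V.sub_mem hx (mem_range_self (F : X →ₗ[ℂ] X) x)
  set G := T.restrict hTV
  have ker_le : ker T ≤ V := fun x hx => hV_of_T x (by rw [mem_ker.mp hx]; exact V.zero_mem)
  have eker : ker G ≃ₗ[ℂ] ker T := by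
    rw [ker_restrict]
    exact Submodule.comapSubtypeEquivOfLe ker_le
  set φ := (range T).mkQ ∘ₗ V.subtype
  have hφ_surj : Function.Surjective φ := by
    intro q
    obtain ⟨x, rfl⟩ := (range T).mkQ_surjective q
    refine ⟨⟨-F x, V.neg_mem (mem_range_self _ x)⟩, (Submodule.Quotient.eq _).mpr ⟨-x, ?_⟩⟩
    show T (-x) = -F x - x
    rw [map_neg, hT]
    abel
  have hφ_ker : ker φ = range G := by
    ext ⟨v, hv⟩
    simp only [φ, mem_ker, coe_comp, Function.comp_apply, Submodule.mkQ_apply,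
      Submodule.coe_subtype, Submodule.Quotient.mk_eq_zero]
    constructor
    · rintro ⟨x, rfl⟩
      exact ⟨⟨x, hV_of_T x hv⟩, rfl⟩
    · rintro ⟨w, hw⟩
      exact ⟨w, congrArg Subtype.val hw⟩
  let ecoker : (V ⧸ range G) ≃ₗ[ℂ] (X ⧸ range T) := hφ_ker ▸ φ.quotKerEquivOfSurjective hφ_surj
  refine ⟨⟨eker.finiteDimensional, isClosed_range_one_add hF, ecoker.finiteDimensional⟩, ?_⟩
  have h₁ := G.finrank_range_add_finrank_ker
  have h₂ := (range G).finrank_quotient_add_finrank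
  rw [fredholmIndex, ← eker.finrank_eq, ← ecoker.finrank_eq]
  omega

theorem isWeyl_of_isUnit_add {T F : X →L[ℂ] X} (hF : (F : X →ₗ[ℂ] X).HasFiniteRange)
    (hTF : IsUnit (T + F)) : IsWeyl T := by
  obtain ⟨u, hu⟩ := hTF
  have hT : T = u * (1 + -(↑u⁻¹ * F)) := by
    rw [mul_add, mul_one, mul_neg, ← mul_assoc, Units.mul_inv, one_mul, hu]
    abel
  rw [hT]
  exact (isWeyl_one_add (hF.comp_left _).neg).isUnit_mul u.isUnit

variable [CompleteSpace X]

/- Index zero gives an isomorphism `L : ker T ≃ W` onto a complement `W` of `range T`; adding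
`L ∘ P` for a projection `P` onto `ker T` makes `T` bijective. -/
theorem IsWeyl.exists_isUnit_add {T : X →L[ℂ] X} (hT : IsWeyl T) :
    ∃ F : X →L[ℂ] X, (F : X →ₗ[ℂ] X).HasFiniteRange ∧ IsUnit (T + F) := by
  obtain ⟨⟨hker, -, hcoker⟩, hindex⟩ := hT
  rw [fredholmIndex] at hindex
  set K := ker (T : X →ₗ[ℂ] X)
  set R := range (T : X →ₗ[ℂ] X)
  obtain ⟨P, hP⟩ := Submodule.ClosedComplemented.of_finiteDimensional K
  obtain ⟨W, hRW⟩ := Submodule.exists_isCompl R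
  have hKW : finrank ℂ K = finrank ℂ W := by
    rw [← (R.quotientEquivOfIsCompl W hRW).finrank_eq]
    omega
  have : FiniteDimensional ℂ W := (R.quotientEquivOfIsCompl W hRW).finiteDimensional
  let L : K ≃ₗ[ℂ] W := .ofFinrankEq K W hKW
  let J : K →L[ℂ] X := W.subtypeL ∘L (L : K →ₗ[ℂ] W).toContinuousLinearMap
  have hJ : ∀ k, J k = L k := fun k => rfl
  refine ⟨J ∘L P, (HasFiniteRange.of_finite_dom (f := (J : K →ₗ[ℂ] X))).comp_right _, ?_⟩
  have hPK : ∀ x, T (P x) = 0 := fun x => (P x).2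
  refine ContinuousLinearMap.isUnit_iff_bijective.mpr
    ⟨(injective_iff_map_eq_zero (T + J ∘L P)).mpr fun x hx => ?_, fun y => ?_⟩
  · have hTx : T x = 0 := Submodule.disjoint_def'.mp hRW.disjoint _ ⟨x, rfl⟩ _
      (W.neg_mem (L (P x)).2) (eq_neg_of_add_eq_zero_left hx)
    have hPx : P x = 0 := by
      have : (L (P x) : X) = 0 := by simpa [hTx, hJ] using hx
      simpa using this
    simpa [hPx] using congrArg Subtype.val (hP ⟨x, hTx⟩).symm
  · have hy : y ∈ R ⊔ W := hRW.sup_eq_top ▸ Submodule.mem_top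
    obtain ⟨r, ⟨a, rfl⟩, w, hw, rfl⟩ := Submodule.mem_sup.mp hy
    refine ⟨a - P a + L.symm ⟨w, hw⟩, ?_⟩
    have hPx : P (a - P a + L.symm ⟨w, hw⟩) = L.symm ⟨w, hw⟩ := by simp [hP]
    simp [hJ, hPx, hPK]

theorem isOpen_setOf_isWeyl : IsOpen {T : X →L[ℂ] X | IsWeyl T} := by
  refine isOpen_iff_mem_nhds.mpr fun T hT => ?_
  obtain ⟨F, hF, hTF⟩ := hT.exists_isUnit_add
  have : {S : X →L[ℂ] X | IsUnit (S + F)} ∈ nhds T :=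
    (Units.isOpen.preimage (continuous_add_const F)).mem_nhds hTF
  filter_upwards [this] with S hS using isWeyl_of_isUnit_add hF hS

theorem exists_pos_forall_isWeyl_of_dist_lt {𝕏 : Type*} [TopologicalSpace 𝕏] [CompactSpace 𝕏]
    {f : 𝕏 → X →L[ℂ] X} (hf : Continuous f) (hfW : ∀ x, IsWeyl (f x)) :
    ∃ δ > 0, ∀ g : 𝕏 → X →L[ℂ] X, (∀ x, dist (g x) (f x) < δ) → ∀ x, IsWeyl (g x) := by
  obtain ⟨δ, hδ, hsub⟩ := (isCompact_range hf).exists_thickening_subset_open isOpen_setOf_isWeyl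
    (Set.range_subset_iff.mpr hfW)
  exact ⟨δ, hδ, fun g hg x => hsub (Metric.mem_thickening_iff.mpr ⟨f x, ⟨x, rfl⟩, hg x⟩)⟩

end Weyl

theorem weylSpectrum_upper_semicontinuous
    {X : Type*} [NormedAddCommGroup X] [NormedSpace ℂ X] [CompleteSpace X]
    {𝕏 : Type*} [TopologicalSpace 𝕏] [CompactSpace 𝕏]
    (𝒯 : 𝕏 → X →L[ℂ] X) (h𝒯cont : Continuous 𝒯)
    (𝒯n : ℕ → 𝕏 → X →L[ℂ] X) (h𝒯ncont : ∀ n, Continuous (𝒯n n))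
    (hconv : Filter.Tendsto (fun n => ⨆ x, ‖𝒯n n x - 𝒯 x‖) Filter.atTop (nhds 0)) :
    ∀ z ∉ weylSpectrum 𝒯, ∃ ε > 0, ∃ N : ℕ, ∀ n ≥ N,
      ∀ μ : ℂ, ‖μ - z‖ < ε → μ ∉ weylSpectrum (𝒯n n) := by
  intro z hz
  have hW : ∀ x, IsWeyl (𝒯 x - z • 1) := fun x => not_not.mp fun h => hz ⟨x, h⟩
  obtain ⟨δ, hδ, hδW⟩ := exists_pos_forall_isWeyl_of_dist_lt (h𝒯cont.sub continuous_const) hW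
  obtain ⟨N, hN⟩ := Filter.eventually_atTop.mp (hconv.eventually (gt_mem_nhds (half_pos hδ)))
  refine ⟨δ / 2, half_pos hδ, N, fun n hn μ hμ ⟨x, hx⟩ =>
    hx (hδW (fun y => 𝒯n n y - μ • 1) (fun y => ?_) x)⟩
  have hsup : ‖𝒯n n y - 𝒯 y‖ ≤ ⨆ y, ‖𝒯n n y - 𝒯 y‖ :=
    le_ciSup (isCompact_range ((h𝒯ncont n).sub h𝒯cont).norm).bddAbove y
  calc dist (𝒯n n y - μ • 1) (𝒯 y - z • 1)
      = ‖(𝒯n n y - 𝒯 y) - (μ - z) • (1 : X →L[ℂ] X)‖ := by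
        rw [dist_eq_norm, sub_smul]; abel_nf
    _ ≤ ‖𝒯n n y - 𝒯 y‖ + ‖(μ - z) • (1 : X →L[ℂ] X)‖ := norm_sub_le _ _
    _ ≤ ‖𝒯n n y - 𝒯 y‖ + ‖μ - z‖ := by
        gcongr
        have hone : ‖(1 : X →L[ℂ] X)‖ ≤ 1 := ContinuousLinearMap.norm_id_le
        exact (norm_smul_le _ _).trans (mul_le_of_le_one_right (norm_nonneg _) hone)
    _ < δ / 2 + δ / 2 := add_lt_add_of_le_of_lt (hsup.trans (hN n hn).le) hμ
    _ = δ := add_halves δ
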